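/- arXiv:2202.07763 — 2 statements merged into one kernel-verified Lean document; each statement's English description precedes it below -/
import Mathlib

section
/- Let f(q) = Σ_{n≥0} a_n q^n with a_0 ≠ 0 be analytic and zero-free on the open unit disk, define c_n as the Maclaurin coefficients of 1/f, and set C(n) = c_0 + c_1 + ⋯ + c_n and A(n) = a_0 + ⋯ + a_n. If A := lim_{n→∞} A(n)/n exists and A ≠ 0, then as q → 1 radially (q real, q → 1⁻), Σ_{n≥0} C(n) q^n → 1/A. -/
/-!
Write `f(q) = ∑ aₙ qⁿ`. Since `1/f` is holomorphic on the unit disk, its Taylor series converges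
there, and multiplying it by the series of `f` shows that its coefficients are those of the formal
inverse, i.e. the `cₙ`. Multiplying by the geometric series turns coefficients into partial sums:
`∑ C(n) qⁿ = 1 / (f(q) (1 - q))` and `∑ A(n) qⁿ = f(q) / (1 - q)`, so
`∑ C(n) qⁿ = 1 / ((1 - q)² ∑ A(n) qⁿ)`. Finally `A(n) = A n + o(n)` and `(1 - q)² ∑ n qⁿ = q`
give `(1 - q)² ∑ A(n) qⁿ → A`.
-/

open Filter Topology Asymptotics PowerSeries FormalMultilinearSeries

section Abelian

variable {d : ℕ → ℂ} {ε M q : ℝ}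

lemma exists_norm_le_mul_add_of_isLittleO {E : Type*} [NormedAddCommGroup E] {d : ℕ → E}
    (hd : d =o[atTop] fun n => (n : ℝ)) (hε : 0 < ε) : ∃ M, ∀ n, ‖d n‖ ≤ ε * n + M := by
  obtain ⟨N, hN⟩ := eventually_atTop.1 (hd.def hε)
  refine ⟨∑ i ∈ Finset.range N, ‖d i‖, fun n => ?_⟩
  have hsum_nonneg : 0 ≤ ∑ i ∈ Finset.range N, ‖d i‖ := by positivity
  rcases lt_or_ge n N with hn | hn
  · have := Finset.single_le_sum (fun i _ => norm_nonneg (d i)) (Finset.mem_range.2 hn)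
    linarith [mul_nonneg hε.le (Nat.cast_nonneg (α := ℝ) n)]
  · simpa using (hN n hn).trans (le_add_of_nonneg_right hsum_nonneg)

lemma hasSum_mul_add_mul_pow (hq0 : 0 ≤ q) (hq1 : q < 1) :
    HasSum (fun n : ℕ => (ε * n + M) * q ^ n) (ε * (q / (1 - q) ^ 2) + M * (1 - q)⁻¹) := by
  have hq : ‖q‖ < 1 := by rwa [Real.norm_of_nonneg hq0]
  have h := ((hasSum_coe_mul_geometric_of_norm_lt_one hq).mul_left ε).add
    ((hasSum_geometric_of_lt_one hq0 hq1).mul_left M)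
  simp only [← mul_assoc, ← add_mul] at h
  exact h

lemma norm_mul_pow_le (hd : ∀ n, ‖d n‖ ≤ ε * n + M) (hq0 : 0 ≤ q) (n : ℕ) :
    ‖d n * (q : ℂ) ^ n‖ ≤ (ε * n + M) * q ^ n := by
  rw [norm_mul, norm_pow, Complex.norm_real, Real.norm_of_nonneg hq0]
  gcongr
  exact hd n

lemma summable_mul_pow_of_norm_le (hd : ∀ n, ‖d n‖ ≤ ε * n + M) (hq0 : 0 ≤ q) (hq1 : q < 1) :
    Summable fun n => d n * (q : ℂ) ^ n :=
  (hasSum_mul_add_mul_pow hq0 hq1).summable.of_norm_bounded (norm_mul_pow_le hd hq0)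

lemma norm_tsum_mul_pow_le (hd : ∀ n, ‖d n‖ ≤ ε * n + M) (hq0 : 0 ≤ q) (hq1 : q < 1) :
    ‖∑' n, d n * (q : ℂ) ^ n‖ ≤ ε * (q / (1 - q) ^ 2) + M * (1 - q)⁻¹ :=
  tsum_of_norm_bounded (hasSum_mul_add_mul_pow hq0 hq1) (norm_mul_pow_le hd hq0)

theorem tendsto_one_sub_sq_mul_tsum_mul_pow_of_isLittleO (hd : d =o[atTop] fun n => (n : ℝ)) :
    Tendsto (fun q : ℝ => (1 - (q : ℂ)) ^ 2 * ∑' n, d n * (q : ℂ) ^ n) (𝓝[<] 1) (𝓝 0) := by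
  refine NormedAddGroup.tendsto_nhds_zero.2 fun ε hε => ?_
  obtain ⟨M, hM⟩ := exists_norm_le_mul_add_of_isLittleO hd (half_pos hε)
  have hbound : Tendsto (fun q : ℝ => ε / 2 * q + M * (1 - q)) (𝓝[<] 1) (𝓝 (ε / 2)) := by
    have : Continuous fun q : ℝ => ε / 2 * q + M * (1 - q) := by fun_prop
    simpa using (this.tendsto 1).mono_left nhdsWithin_le_nhds
  filter_upwards [hbound.eventually (gt_mem_nhds (half_lt_self hε)), self_mem_nhdsWithin,
    Ioo_mem_nhdsLT zero_lt_one] with q hlt hq1 hq0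
  have hq : 0 < 1 - q := sub_pos.2 hq1
  calc ‖(1 - (q : ℂ)) ^ 2 * ∑' n, d n * (q : ℂ) ^ n‖
      = (1 - q) ^ 2 * ‖∑' n, d n * (q : ℂ) ^ n‖ := by
        rw [norm_mul, norm_pow, ← Complex.ofReal_one, ← Complex.ofReal_sub, Complex.norm_real,
          Real.norm_of_nonneg hq.le]
    _ ≤ (1 - q) ^ 2 * (ε / 2 * (q / (1 - q) ^ 2) + M * (1 - q)⁻¹) := by
        gcongr; exact norm_tsum_mul_pow_le hM hq0.1.le hq1
    _ = ε / 2 * q + M * (1 - q) := by field_simp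
    _ < ε := hlt

theorem tendsto_one_sub_sq_mul_tsum_mul_pow {s : ℕ → ℂ} {A : ℂ}
    (hs : Tendsto (fun n : ℕ => s n / n) atTop (𝓝 A)) :
    Tendsto (fun q : ℝ => (1 - (q : ℂ)) ^ 2 * ∑' n, s n * (q : ℂ) ^ n) (𝓝[<] 1) (𝓝 A) := by
  set d : ℕ → ℂ := fun n => s n - A * n
  have hd : d =o[atTop] fun n => (n : ℝ) := by
    have hdiv : Tendsto (fun n : ℕ => d n / n) atTop (𝓝 0) := by
      refine (sub_self A ▸ hs.sub_const A).congr' ?_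
      filter_upwards [eventually_ne_atTop 0] with n hn
      field_simp [d]
      ring
    refine ((isLittleO_iff_tendsto' ?_).2 hdiv).norm_right.congr_right fun n => ?_
    · filter_upwards [eventually_ne_atTop 0] with n hn h
      exact absurd h (Nat.cast_ne_zero.2 hn)
    · exact Complex.norm_natCast n
  obtain ⟨M, hM⟩ := exists_norm_le_mul_add_of_isLittleO hd one_pos
  have hlin : Tendsto (fun q : ℝ => A * q) (𝓝[<] 1) (𝓝 A) := by
    have : Continuous fun q : ℝ => A * q := by fun_prop
    simpa using (this.tendsto 1).mono_left nhdsWithin_le_nhds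
  refine (zero_add A ▸ (tendsto_one_sub_sq_mul_tsum_mul_pow_of_isLittleO hd).add hlin).congr' ?_
  filter_upwards [Ioo_mem_nhdsLT zero_lt_one] with q hq
  have hq' : ‖(q : ℂ)‖ < 1 := by rw [Complex.norm_real, Real.norm_of_nonneg hq.1.le]; exact hq.2
  have hq1 : 1 - (q : ℂ) ≠ 0 := sub_ne_zero.2 fun h => hq'.ne (by simp [← h])
  have hsplit : ∑' n, s n * (q : ℂ) ^ n = ∑' n, d n * (q : ℂ) ^ n + A * (q / (1 - q) ^ 2) := by
    rw [← tsum_coe_mul_geometric_of_norm_lt_one hq', ← tsum_mul_left, ← Summable.tsum_add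
      (summable_mul_pow_of_norm_le hM hq.1.le hq.2)
      ((summable_pow_mul_geometric_of_norm_lt_one 1 hq').mul_left A |>.congr fun n => by simp)]
    exact tsum_congr fun n => by simp only [d]; ring
  rw [hsplit]
  field_simp

end Abelian

section PowerSeriesOnDisk

variable {a : ℕ → ℂ}

lemma one_le_radius_ofScalars (ha : ∀ z : ℂ, ‖z‖ < 1 → Summable fun n => a n * z ^ n) :
    1 ≤ (ofScalars ℂ a).radius := by
  refine ENNReal.le_of_forall_nnreal_lt fun r hr => (ofScalars ℂ a).le_radius_of_tendsto (l := 0) ?_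
  have hr' : ‖((r : ℝ) : ℂ)‖ < 1 := by simpa using hr
  simpa [ofScalars_norm] using (ha _ hr').tendsto_atTop_zero.norm

lemma summable_norm_mul_pow_of_forall_summable
    (ha : ∀ z : ℂ, ‖z‖ < 1 → Summable fun n => a n * z ^ n) {z : ℂ} (hz : ‖z‖ < 1) :
    Summable fun n => ‖a n * z ^ n‖ := by
  have hr : ((‖z‖₊ : NNReal) : ENNReal) < (ofScalars ℂ a).radius :=
    lt_of_lt_of_le (by exact_mod_cast hz) (one_le_radius_ofScalars ha)
  simpa [ofScalars_norm] using (ofScalars ℂ a).summable_norm_mul_pow hr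

lemma differentiableOn_tsum_mul_pow (ha : ∀ z : ℂ, ‖z‖ < 1 → Summable fun n => a n * z ^ n) :
    DifferentiableOn ℂ (fun z => ∑' n, a n * z ^ n) (Metric.ball 0 1) := by
  have hball : Metric.ball (0 : ℂ) 1 ⊆ Metric.eball 0 (ofScalars ℂ a).radius := fun z hz => by
    refine lt_of_lt_of_le ?_ (one_le_radius_ofScalars ha)
    simp only [Metric.mem_ball, dist_zero_right] at hz
    simpa [edist_zero_right, enorm_eq_nnnorm, ← NNReal.coe_lt_one] using hz
  have hsum : (ofScalars ℂ a).sum = fun z => ∑' n, a n * z ^ n := by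
    simpa [ofScalarsSum] using ofScalarsSum_eq_tsum (E := ℂ) a
  exact hsum ▸ (ofScalars ℂ a).analyticOnNhd.differentiableOn.mono hball

end PowerSeriesOnDisk

lemma hasSum_coeff_mul_mul_pow {a b : ℕ → ℂ} {z : ℂ} (ha : Summable fun n => ‖a n * z ^ n‖)
    (hb : Summable fun n => ‖b n * z ^ n‖) :
    HasSum (fun n => coeff n (mk a * mk b) * z ^ n)
      ((∑' n, a n * z ^ n) * ∑' n, b n * z ^ n) := by
  refine (hasSum_sum_range_mul_of_summable_norm ha hb).congr_fun fun n => ?_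
  rw [coeff_mul, Finset.Nat.sum_antidiagonal_eq_sum_range_succ
    (fun i j => coeff i (mk a) * coeff j (mk b)), Finset.sum_mul]
  refine Finset.sum_congr rfl fun k hk => ?_
  rw [coeff_mk, coeff_mk, ← pow_mul_pow_sub z (Finset.mem_range_succ_iff.1 hk)]
  ring

lemma hasSum_sum_range_mul_pow {b : ℕ → ℂ} {z : ℂ} (hb : Summable fun n => ‖b n * z ^ n‖)
    (hz : ‖z‖ < 1) :
    HasSum (fun n => (∑ i ∈ Finset.range (n + 1), b i) * z ^ n)
      ((∑' n, b n * z ^ n) * (1 - z)⁻¹) := by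
  have hgeom : Summable fun n => ‖(1 : ℂ) * z ^ n‖ := by
    simpa using summable_geometric_of_lt_one (norm_nonneg z) hz
  have h := hasSum_coeff_mul_mul_pow hb hgeom
  simp only [one_mul, tsum_geometric_of_norm_lt_one hz] at h
  refine h.congr_fun fun n => ?_
  rw [coeff_mul, Finset.Nat.sum_antidiagonal_eq_sum_range_succ
    (fun i j => coeff i (mk b) * coeff j (mk fun _ => (1 : ℂ)))]
  simp

lemma PowerSeries.eq_of_eventually_hasSum_coeff_mul_pow {φ ψ : PowerSeries ℂ} {F : ℂ → ℂ}
    (hφ : ∀ᶠ z in 𝓝 0, HasSum (fun n => coeff n φ * z ^ n) (F z))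
    (hψ : ∀ᶠ z in 𝓝 0, HasSum (fun n => coeff n ψ * z ^ n) (F z)) : φ = ψ := by
  have hseries : ∀ χ : PowerSeries ℂ, (∀ᶠ z in 𝓝 0, HasSum (fun n => coeff n χ * z ^ n) (F z)) →
      HasFPowerSeriesAt F (ofScalars ℂ fun n => coeff n χ) 0 := fun χ hχ => by
    rw [hasFPowerSeriesAt_iff]
    simpa only [coeff_ofScalars, smul_eq_mul, mul_comm, zero_add] using hχ
  have h := ((hseries φ hφ).eq_formalMultilinearSeries (hseries ψ hψ))
  ext n
  exact congrFun ((ofScalars_series_eq_iff ℂ _ _).1 h) n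

theorem hasSum_coeff_inv_mul_pow {a : ℕ → ℂ} (ha0 : a 0 ≠ 0)
    (ha : ∀ z : ℂ, ‖z‖ < 1 → Summable fun n => a n * z ^ n)
    (hzero : ∀ z : ℂ, ‖z‖ < 1 → ∑' n, a n * z ^ n ≠ 0) {z : ℂ} (hz : ‖z‖ < 1) :
    HasSum (fun n => coeff n (mk a)⁻¹ * z ^ n) (∑' n, a n * z ^ n)⁻¹ := by
  set f : ℂ → ℂ := fun z => ∑' n, a n * z ^ n
  set τ : ℕ → ℂ := fun n => (n.factorial : ℂ)⁻¹ * iteratedDeriv n f⁻¹ 0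
  have hτ : ∀ z : ℂ, ‖z‖ < 1 → HasSum (fun n => τ n * z ^ n) (f z)⁻¹ := fun z hz => by
    have hdiff : DifferentiableOn ℂ f⁻¹ (Metric.ball 0 1) :=
      (differentiableOn_tsum_mul_pow ha).inv fun w hw => hzero w (mem_ball_zero_iff.1 hw)
    simpa [τ, mul_comm, mul_left_comm] using
      Complex.hasSum_taylorSeries_on_ball hdiff (mem_ball_zero_iff.2 hz)
  have hmul : mk a * mk τ = 1 := by
    refine PowerSeries.eq_of_eventually_hasSum_coeff_mul_pow (F := fun _ => 1) ?_ ?_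
    · filter_upwards [Metric.ball_mem_nhds (0 : ℂ) one_pos] with w hw
      have hw' : ‖w‖ < 1 := mem_ball_zero_iff.1 hw
      have h := hasSum_coeff_mul_mul_pow (summable_norm_mul_pow_of_forall_summable ha hw')
        (summable_norm_mul_pow_of_forall_summable (fun w hw => (hτ w hw).summable) hw')
      rwa [(hτ w hw').tsum_eq, mul_inv_cancel₀ (hzero w hw')] at h
    · refine Eventually.of_forall fun w => ?_
      simpa using hasSum_single (f := fun n => coeff n (1 : PowerSeries ℂ) * w ^ n) 0
        fun n hn => by simp [coeff_one, hn]
  have hinv : mk τ = (mk a)⁻¹ :=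
    (eq_inv_iff_mul_eq_one (by rwa [← coeff_zero_eq_constantCoeff_apply, coeff_mk])).2
      (by rw [mul_comm, hmul])
  simpa [← hinv] using hτ z hz

/-- if `f(q) = ∑ aₙ qⁿ` is analytic and zero-free on the open unit disk,
`cₙ` are the Maclaurin coefficients of `1/f`, `C(n) = c₀ + ⋯ + cₙ`,
`A(n) = a₀ + ⋯ + aₙ`, and `A = lim A(n)/n` exists and is nonzero, then
`∑ C(n) qⁿ → 1/A` as `q → 1⁻` radially. -/
theorem stmt4 (a c : ℕ → ℂ) (A : ℂ)
    (ha0 : a 0 ≠ 0)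
    (hsum : ∀ q : ℂ, ‖q‖ < 1 → Summable (fun n => a n * q ^ n))
    (hzero : ∀ q : ℂ, ‖q‖ < 1 → (∑' n, a n * q ^ n) ≠ 0)
    (hc : ∀ n, c n = PowerSeries.coeff n (PowerSeries.mk a)⁻¹)
    (hA : Tendsto (fun n : ℕ => (∑ i ∈ Finset.range (n + 1), a i) / (n : ℂ))
      atTop (nhds A))
    (hA0 : A ≠ 0) :
    Tendsto (fun q : ℝ => ∑' n : ℕ, (∑ i ∈ Finset.range (n + 1), c i) * (q : ℂ) ^ n)
      (nhdsWithin 1 (Set.Iio 1)) (nhds (1 / A)) := by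
  obtain rfl : c = fun n => coeff n (mk a)⁻¹ := funext hc
  rw [one_div]
  refine ((tendsto_one_sub_sq_mul_tsum_mul_pow hA).inv₀ hA0).congr' ?_
  filter_upwards [Ioo_mem_nhdsLT (neg_lt_self one_pos)] with q hq
  have hq' : ‖(q : ℂ)‖ < 1 := by rw [Complex.norm_real, Real.norm_eq_abs, abs_lt]; exact hq
  have hq1 : 1 - (q : ℂ) ≠ 0 := sub_ne_zero.2 fun h => hq'.ne (by simp [← h])
  have hinv := fun z (hz : ‖z‖ < 1) => hasSum_coeff_inv_mul_pow ha0 hsum hzero hz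
  rw [(hasSum_sum_range_mul_pow (summable_norm_mul_pow_of_forall_summable hsum hq') hq').tsum_eq,
    (hasSum_sum_range_mul_pow (summable_norm_mul_pow_of_forall_summable
      (fun z hz => (hinv z hz).summable) hq') hq').tsum_eq, (hinv _ hq').tsum_eq]
  field_simp
end

section
/- Frobenius/Abel-type limit: let f(q) = Σ_{n≥0} a_n q^n with a_n ∈ ℂ, and suppose A := lim_{N→∞} (1/N) Σ_{n=0}^{N−1} a_n exists. Then f converges on |q| < 1 and lim_{q→1⁻} (1 − q) f(q) = A, with q → 1 along the real axis. -/
/-!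
With `S N = ∑ n ∈ range N, aₙ`, the hypothesis gives `S N = O(N)`, hence `aₙ = O(n)` and
convergence on the unit disk. Summation by parts gives `f(q) = (1 - q) ∑ S (n + 1) qⁿ`, that is
`(1 - q) f(q) = ∑ wₙ(q) • (S (n + 1) / (n + 1))` with `wₙ(q) = (1 - q)² (n + 1) qⁿ`. For `0 < q < 1`
these weights are nonnegative with total mass `1` (the series of `(n + 1) qⁿ` is `(1 - q)⁻²`), and
each of them tends to `0` as `q → 1`. Averaging against such a kernel preserves limits, and the
Cesàro means `S (n + 1) / (n + 1)` tend to `A`.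
-/

open Filter Topology Finset Asymptotics

theorem isBigO_natCast_of_tendsto_div {𝕜 : Type*} [RCLike 𝕜] {u : ℕ → 𝕜} {A : 𝕜}
    (h : Tendsto (fun n => u n / n) atTop (𝓝 A)) : u =O[atTop] fun n => (n : ℝ) := by
  have hu : u =ᶠ[atTop] fun n => u n / n * n := by
    filter_upwards [eventually_ne_atTop 0] with n hn
    rw [div_mul_cancel₀ _ (Nat.cast_ne_zero.2 hn)]
  have hn : (fun n : ℕ => (n : 𝕜)) =O[atTop] fun n => (n : ℝ) := isBigO_of_le _ fun n => by simp
  simpa using hu.trans_isBigO ((h.isBigO_one ℝ).mul hn)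

theorem isBigO_natCast_comp_add_one {E : Type*} [Norm E] {f : ℕ → E}
    (hf : f =O[atTop] fun n => (n : ℝ)) : (fun n => f (n + 1)) =O[atTop] fun n => (n : ℝ) := by
  refine (hf.comp_tendsto (tendsto_add_atTop_nat 1)).trans (IsBigO.of_bound 2 ?_)
  filter_upwards [eventually_ge_atTop 1] with n hn
  have : (1 : ℝ) ≤ n := by exact_mod_cast hn
  simp only [Function.comp_apply, Nat.cast_add, Nat.cast_one, Real.norm_eq_abs]
  rw [abs_of_nonneg (by positivity), abs_of_nonneg (by positivity)]
  linarith

theorem isBigO_natCast_of_isBigO_sum_range {E : Type*} [SeminormedAddCommGroup E] {a : ℕ → E}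
    (hS : (fun N => ∑ n ∈ range N, a n) =O[atTop] fun n => (n : ℝ)) :
    a =O[atTop] fun n => (n : ℝ) := by
  have : a = fun n => ∑ k ∈ range (n + 1), a k - ∑ k ∈ range n, a k := by
    ext n; rw [sum_range_succ, add_sub_cancel_left]
  rw [this]
  exact (isBigO_natCast_comp_add_one hS).sub hS

section PowerSeries

variable {𝕜 : Type*} [NormedField 𝕜] [CompleteSpace 𝕜]

theorem summable_mul_pow_of_isBigO_natCast {f : ℕ → 𝕜} (hf : f =O[atTop] fun n => (n : ℝ))
    {q : 𝕜} (hq : ‖q‖ < 1) : Summable fun n => f n * q ^ n := by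
  have hq' : ‖‖q‖‖ < 1 := by rwa [norm_norm]
  refine summable_of_isBigO_nat (g := fun n => (n : ℝ) * ‖q‖ ^ n)
    (by simpa using summable_pow_mul_geometric_of_norm_lt_one 1 hq') ?_
  exact hf.mul (isBigO_of_le _ fun n => by simp)

theorem tsum_mul_pow_eq_one_sub_mul_tsum_sum_range {a : ℕ → 𝕜}
    (hS : (fun N => ∑ n ∈ range N, a n) =O[atTop] fun n => (n : ℝ)) {q : 𝕜} (hq : ‖q‖ < 1) :
    ∑' n, a n * q ^ n = (1 - q) * ∑' n, (∑ k ∈ range (n + 1), a k) * q ^ n := by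
  set S := fun N => ∑ n ∈ range N, a n
  have hsum : Summable fun n => S n * q ^ n := summable_mul_pow_of_isBigO_natCast hS hq
  have hsum_succ : Summable fun n => S (n + 1) * q ^ n :=
    summable_mul_pow_of_isBigO_natCast (isBigO_natCast_comp_add_one hS) hq
  have hshift : ∑' n, S n * q ^ n = q * ∑' n, S (n + 1) * q ^ n := by
    rw [hsum.tsum_eq_zero_add, ← tsum_mul_left]
    simp only [S, range_zero, sum_empty, zero_mul, zero_add, pow_succ]
    congr 1 with n
    ring
  calc ∑' n, a n * q ^ n = ∑' n, (S (n + 1) * q ^ n - S n * q ^ n) := by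
        congr 1 with n
        simp only [S, ← sub_mul, sum_range_succ, add_sub_cancel_left]
    _ = (1 - q) * ∑' n, S (n + 1) * q ^ n := by
        rw [hsum_succ.tsum_sub hsum, hshift]
        ring

end PowerSeries

theorem tendsto_tsum_mul_of_tendsto_zero {ι : Type*} {l : Filter ι} {w : ι → ℕ → ℝ}
    {d : ℕ → ℝ} (hw_nonneg : ∀ᶠ i in l, ∀ n, 0 ≤ w i n) (hw_sum : ∀ᶠ i in l, HasSum (w i) 1)
    (hw : ∀ n, Tendsto (fun i => w i n) l (𝓝 0)) (hd_nonneg : ∀ n, 0 ≤ d n)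
    (hd : Tendsto d atTop (𝓝 0)) :
    Tendsto (fun i => ∑' n, w i n * d n) l (𝓝 0) := by
  obtain ⟨M, hM⟩ := hd.bddAbove_range
  rw [Metric.tendsto_nhds]
  intro ε hε
  obtain ⟨N, hN⟩ := eventually_atTop.1 (hd.eventually (gt_mem_nhds (half_pos hε)))
  have hhead : Tendsto (fun i => ∑ n ∈ range N, w i n * d n) l (𝓝 0) := by
    simpa using tendsto_finsetSum (range N) fun n _ => (hw n).mul_const (d n)
  filter_upwards [hw_nonneg, hw_sum, hhead.eventually (gt_mem_nhds (half_pos hε))]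
    with i hi_nonneg hi_sum hi_head
  have hsum : Summable fun n => w i n * d n :=
    (hi_sum.summable.mul_right M).of_nonneg_of_le (fun n => mul_nonneg (hi_nonneg n) (hd_nonneg n))
      fun n => mul_le_mul_of_nonneg_left (hM ⟨n, rfl⟩) (hi_nonneg n)
  have htail_w : ∑' n, w i (n + N) ≤ 1 := by
    rw [← hi_sum.tsum_eq, ← hi_sum.summable.sum_add_tsum_nat_add N]
    exact le_add_of_nonneg_left (sum_nonneg fun n _ => hi_nonneg n)
  have htail : ∑' n, w i (n + N) * d (n + N) ≤ ε / 2 := by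
    calc ∑' n, w i (n + N) * d (n + N) ≤ ∑' n, ε / 2 * w i (n + N) := by
          refine ((summable_nat_add_iff N).2 hsum).tsum_le_tsum (fun n => ?_)
            (((summable_nat_add_iff N).2 hi_sum.summable).mul_left _)
          rw [mul_comm]
          exact mul_le_mul_of_nonneg_right (hN _ (Nat.le_add_left N n)).le (hi_nonneg _)
      _ ≤ ε / 2 := by
          rw [tsum_mul_left]
          exact mul_le_of_le_one_right (half_pos hε).le htail_w
  have hnonneg : 0 ≤ ∑' n, w i n * d n :=
    tsum_nonneg fun n => mul_nonneg (hi_nonneg n) (hd_nonneg n)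
  rw [Real.dist_eq, sub_zero, abs_of_nonneg hnonneg, ← hsum.sum_add_tsum_nat_add N]
  linarith

theorem tendsto_tsum_smul_of_tendsto {ι E : Type*} [NormedAddCommGroup E] [NormedSpace ℝ E]
    [CompleteSpace E] {l : Filter ι} {w : ι → ℕ → ℝ} {c : ℕ → E} {A : E}
    (hw_nonneg : ∀ᶠ i in l, ∀ n, 0 ≤ w i n) (hw_sum : ∀ᶠ i in l, HasSum (w i) 1)
    (hw : ∀ n, Tendsto (fun i => w i n) l (𝓝 0)) (hc : Tendsto c atTop (𝓝 A)) :
    Tendsto (fun i => ∑' n, w i n • c n) l (𝓝 A) := by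
  have hd : Tendsto (fun n => ‖c n - A‖) atTop (𝓝 0) := tendsto_iff_norm_sub_tendsto_zero.1 hc
  obtain ⟨M, hM⟩ := hd.bddAbove_range
  rw [tendsto_iff_norm_sub_tendsto_zero]
  refine squeeze_zero' (Eventually.of_forall fun _ => norm_nonneg _) ?_
    (tendsto_tsum_mul_of_tendsto_zero hw_nonneg hw_sum hw (fun _ => norm_nonneg _) hd)
  filter_upwards [hw_nonneg, hw_sum] with i hi_nonneg hi_sum
  have hnorm : Summable fun n => ‖w i n • (c n - A)‖ := by
    simp_rw [norm_smul, Real.norm_of_nonneg (hi_nonneg _)]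
    exact (hi_sum.summable.mul_right M).of_nonneg_of_le
      (fun n => mul_nonneg (hi_nonneg n) (norm_nonneg _))
      fun n => mul_le_mul_of_nonneg_left (hM ⟨n, rfl⟩) (hi_nonneg n)
  have hA : HasSum (fun n => w i n • A) A := by simpa using hi_sum.smul_const A
  have hsplit : ∑' n, w i n • c n - A = ∑' n, w i n • (c n - A) := by
    rw [((hnorm.of_norm.hasSum.add hA).congr_fun fun n => ?_).tsum_eq, add_sub_cancel_right]
    rw [← smul_add, sub_add_cancel]
  rw [hsplit]
  refine (norm_tsum_le_tsum_norm hnorm).trans_eq ?_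
  simp_rw [norm_smul, Real.norm_of_nonneg (hi_nonneg _)]

def abelKernel (q : ℝ) (n : ℕ) : ℝ := (1 - q) ^ 2 * ((n + 1) * q ^ n)

theorem abelKernel_nonneg {q : ℝ} (hq : 0 ≤ q) (n : ℕ) : 0 ≤ abelKernel q n := by
  unfold abelKernel; positivity

theorem hasSum_abelKernel {q : ℝ} (hq : |q| < 1) : HasSum (abelKernel q) 1 := by
  have h1 : (1 - q) ^ 2 ≠ 0 := pow_ne_zero _ (by linarith [le_abs_self q])
  have hq' : ‖q‖ < 1 := by rwa [Real.norm_eq_abs]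
  have := (hasSum_choose_mul_geometric_of_norm_lt_one 1 hq').mul_left ((1 - q) ^ 2)
  rw [mul_one_div_cancel h1] at this
  refine this.congr_fun fun n => ?_
  rw [abelKernel, Nat.choose_one_right]
  push_cast
  ring

theorem tendsto_abelKernel (n : ℕ) : Tendsto (fun q => abelKernel q n) (𝓝 1) (𝓝 0) := by
  have : Continuous fun q => abelKernel q n := by unfold abelKernel; fun_prop
  simpa [abelKernel] using this.tendsto 1

section Cesaro

variable {𝕜 : Type*} [RCLike 𝕜] {a : ℕ → 𝕜}

theorem one_sub_mul_tsum_eq_tsum_abelKernel_smul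
    (hS : (fun N => ∑ n ∈ range N, a n) =O[atTop] fun n => (n : ℝ)) {q : ℝ} (hq : |q| < 1) :
    ((1 - q : ℝ) : 𝕜) * ∑' n, a n * (q : 𝕜) ^ n
      = ∑' n, abelKernel q n • ((∑ k ∈ range (n + 1), a k) / ((n + 1 : ℕ) : 𝕜)) := by
  rw [tsum_mul_pow_eq_one_sub_mul_tsum_sum_range hS (by simpa using hq), ← mul_assoc,
    ← tsum_mul_left]
  congr 1 with n
  rw [RCLike.real_smul_eq_coe_mul]
  simp only [abelKernel]
  push_cast
  field_simp

theorem tendsto_one_sub_mul_tsum_of_tendsto_cesaro {A : 𝕜}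
    (hA : Tendsto (fun N : ℕ => (∑ n ∈ range N, a n) / (N : 𝕜)) atTop (𝓝 A)) :
    Tendsto (fun q : ℝ => ((1 - q : ℝ) : 𝕜) * ∑' n, a n * (q : 𝕜) ^ n) (𝓝[<] 1) (𝓝 A) := by
  have hmean : Tendsto (fun n => (∑ k ∈ range (n + 1), a k) / ((n + 1 : ℕ) : 𝕜)) atTop (𝓝 A) :=
    hA.comp (tendsto_add_atTop_nat 1)
  have hq : ∀ᶠ q in 𝓝[<] (1 : ℝ), q ∈ Set.Ioo 0 1 := Ioo_mem_nhdsLT zero_lt_one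
  have hq_abs : ∀ q ∈ Set.Ioo (0 : ℝ) 1, |q| < 1 := fun q hq => by
    rw [abs_of_pos hq.1]; exact hq.2
  have hlim := tendsto_tsum_smul_of_tendsto (l := 𝓝[<] 1)
    (hq.mono fun q hq n => abelKernel_nonneg hq.1.le n)
    (hq.mono fun q hq => hasSum_abelKernel (hq_abs q hq))
    (fun n => (tendsto_abelKernel n).mono_left nhdsWithin_le_nhds) hmean
  refine hlim.congr' (hq.mono fun q hq => ?_)
  exact (one_sub_mul_tsum_eq_tsum_abelKernel_smul (isBigO_natCast_of_tendsto_div hA)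
    (hq_abs q hq)).symm

end Cesaro

/-- Frobenius: if the Cesàro means of `(aₙ)` converge to `A`, then
`f(q) = ∑ aₙ qⁿ` converges on the open unit disk and `(1 - q) f(q) → A` as
`q → 1⁻` along the reals. -/
theorem stmt19 (a : ℕ → ℂ) (A : ℂ)
    (hA : Tendsto (fun N : ℕ => (∑ n ∈ Finset.range N, a n) / (N : ℂ))
      atTop (nhds A)) :
    (∀ q : ℂ, ‖q‖ < 1 → Summable (fun n => a n * q ^ n)) ∧
      Tendsto (fun q : ℝ => ((1 - q : ℝ) : ℂ) * ∑' n : ℕ, a n * (q : ℂ) ^ n)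
        (nhdsWithin 1 (Set.Iio 1)) (nhds A) :=
  ⟨fun _ hq => summable_mul_pow_of_isBigO_natCast
      (isBigO_natCast_of_isBigO_sum_range (isBigO_natCast_of_tendsto_div hA)) hq,
    tendsto_one_sub_mul_tsum_of_tendsto_cesaro hA⟩
end
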